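/- arXiv:1003.4537 — 8 statements merged into one kernel-verified Lean document; each statement's English description precedes it below -/
import Mathlib

section
/- In an algebraic system where (G, ·) is a semigroup, (G, ⋏) a semilattice with natural order ζ, satisfying x(y ⋏ z) = xy ⋏ xz, ζ ⊆ ξ, condition (f-44) ((x ≤ y ∧ u ≤ v ∧ (y,v) ∈ ξ) → (u,x) ∈ ξ), and condition (f-45) ((x,y) ∈ ξ → (x ⋏ y)u = xu ⋏ yu), the natural order ζ is stable (a compatible preorder): x ≤ y and u ≤ v imply xu ≤ yv. -/
/-- The natural order of the semilattice `(G, ⋏)`: `x ≤ y` iff `x ⋏ y = x`. -/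
def sle {G : Type*} (meet : G → G → G) (x y : G) : Prop := meet x y = x

/-- Right action of `G* = G ∪ {e}` (modelled as `Option G`, `none = e`) on `G`:
`act mul a x = a·x`, with `a·e = a`. -/
def act {G : Type*} (mul : G → G → G) (a : G) : Option G → G
  | none => a
  | some b => mul a b

/-- Extension of the relation `δ` to second arguments in `G*`: `(a, e) ∈ δ` always holds. -/
def delta' {G : Type*} (delta : G → G → Prop) (a : G) : Option G → Prop
  | none => True
  | some b => delta a b

/-- `H` is `f_ξ`-closed: for all `x, y, t ∈ G*` and `z, u, v ∈ G`,
`u ↓ v ∧ (u ⋏ v)x ⊡ y ≤ zt ∧ u ∈ H ∧ vx ∈ H → z ∈ H`,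
where `a ⊡ y ≤ c` abbreviates `(a, y) ∈ δ ∧ ay ≤ c`. -/
def FxiClosed {G : Type*} (mul meet : G → G → G) (xi delta : G → G → Prop)
    (H : Set G) : Prop :=
  ∀ (x y t : Option G) (z u v : G),
    xi u v →
    delta' delta (act mul (meet u v) x) y →
    sle meet (act mul (act mul (meet u v) x) y) (act mul z t) →
    u ∈ H → act mul v x ∈ H → z ∈ H

/-- The operator `F_ξ`. -/
def Fxi {G : Type*} (mul meet : G → G → G) (xi delta : G → G → Prop)
    (H : Set G) : Set G :=
  {z | ∃ (u v : G) (x y t : Option G),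
    xi u v ∧
    delta' delta (act mul (meet u v) x) y ∧
    sle meet (act mul (act mul (meet u v) x) y) (act mul z t) ∧
    u ∈ H ∧ act mul v x ∈ H}

/-- `f_ξ(H)`: the least `f_ξ`-closed subset of `G` containing `H`. -/
def fxi {G : Type*} (mul meet : G → G → G) (xi delta : G → G → Prop)
    (H : Set G) : Set G :=
  ⋂₀ {K | H ⊆ K ∧ FxiClosed mul meet xi delta K}

theorem stmt10 {G : Type*} (mul meet : G → G → G) (xi : G → G → Prop)
    (hassoc : ∀ a b c, mul (mul a b) c = mul a (mul b c))
    (hmassoc : ∀ a b c, meet (meet a b) c = meet a (meet b c))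
    (hmcomm : ∀ a b, meet a b = meet b a)
    (hmidem : ∀ a, meet a a = a)
    (hzx : ∀ a b, meet a b = a → xi a b)
    (hf43 : ∀ a b c, mul a (meet b c) = meet (mul a b) (mul a c))
    (hf44 : ∀ x y u v, sle meet x y → sle meet u v → xi y v → xi u x)
    (hf45 : ∀ x y u, xi x y → mul (meet x y) u = meet (mul x u) (mul y u)) :
    ∀ x y u v, sle meet x y → sle meet u v → sle meet (mul x u) (mul y v) := by
  intro x y u v hxy huv
  have h1 : sle meet (mul x u) (mul y u) := by
    have := hf45 x y u (hzx x y hxy)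
    unfold sle at *
    rw [hxy] at this
    rw [← this]
  have h2 : sle meet (mul y u) (mul y v) := by
    unfold sle at *
    rw [← hf43, huv]
  unfold sle at *
  calc meet (mul x u) (mul y v) = meet (meet (mul x u) (mul y u)) (mul y v) := by rw [h1]
    _ = meet (mul x u) (meet (mul y u) (mul y v)) := hmassoc _ _ _
    _ = meet (mul x u) (mul y u) := by rw [h2]
    _ = mul x u := h1
end

section
/- A nonempty subset H of the algebraic system (G, ·, ⋏, ξ, δ) is f_ξ-closed if and only if it satisfies the four conditions: (1) xy ∈ H → x ∈ H; (2) (g₁, g₂) ∈ δ ∧ g₁ ∈ H → g₁g₂ ∈ H; (3) g₁ ⋏ g₂ = g₁ ∈ H → g₂ ∈ H; (4) (g₁, g₂) ∈ ξ ∧ g₁ ∈ H ∧ g₂x ∈ H → (g₁ ⋏ g₂)x ∈ H (where x may be absent, i.e., also (g₁,g₂) ∈ ξ ∧ g₁, g₂ ∈ H → g₁ ⋏ g₂ ∈ H). -/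
section

variable {G : Type*} {mul meet : G → G → G} {xi delta : G → G → Prop} {H : Set G}

namespace FxiClosed

theorem mem_of_mul_mem (hH : FxiClosed mul meet xi delta H)
    (hmidem : ∀ a, meet a a = a) (hrefl : ∀ a, xi a a) {a b : G}
    (hab : mul a b ∈ H) : a ∈ H :=
  hH none none (some b) a (mul a b) (mul a b) (hrefl _) trivial
    (by simp only [act, sle, hmidem]) hab hab

theorem mul_mem_of_delta (hH : FxiClosed mul meet xi delta H)
    (hmidem : ∀ a, meet a a = a) (hrefl : ∀ a, xi a a) {a b : G}
    (hd : delta a b) (ha : a ∈ H) : mul a b ∈ H :=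
  hH none (some b) none (mul a b) a a (hrefl _)
    (by simpa only [delta', act, hmidem] using hd)
    (by simp only [act, sle, hmidem]) ha ha

theorem mem_of_sle (hH : FxiClosed mul meet xi delta H)
    (hmidem : ∀ a, meet a a = a) (hrefl : ∀ a, xi a a) {a b : G}
    (hab : sle meet a b) (ha : a ∈ H) : b ∈ H :=
  hH none none none b a a (hrefl _) trivial (by simpa only [act, hmidem] using hab) ha ha

theorem meet_mul_mem (hH : FxiClosed mul meet xi delta H)
    (hmidem : ∀ a, meet a a = a) {a b c : G} (hxi : xi a b) (ha : a ∈ H)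
    (hbc : mul b c ∈ H) : mul (meet a b) c ∈ H :=
  hH (some c) none none _ a b hxi trivial (hmidem _) ha hbc

theorem meet_mem (hH : FxiClosed mul meet xi delta H)
    (hmidem : ∀ a, meet a a = a) {a b : G} (hxi : xi a b) (ha : a ∈ H)
    (hb : b ∈ H) : meet a b ∈ H :=
  hH none none none _ a b hxi trivial (hmidem _) ha hb

end FxiClosed

theorem fxiClosed_of_conditions
    (h_left : ∀ a b, mul a b ∈ H → a ∈ H)
    (h_delta : ∀ a b, delta a b → a ∈ H → mul a b ∈ H)
    (h_sle : ∀ a b, meet a b = a → a ∈ H → b ∈ H)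
    (h_meet_mul : ∀ a b c, xi a b → a ∈ H → mul b c ∈ H → mul (meet a b) c ∈ H)
    (h_meet : ∀ a b, xi a b → a ∈ H → b ∈ H → meet a b ∈ H) :
    FxiClosed mul meet xi delta H := by
  intro x y t z u v hxi hd hle hu hv
  have hux : act mul (meet u v) x ∈ H := by
    cases x with
    | none => exact h_meet u v hxi hu hv
    | some c => exact h_meet_mul u v c hxi hu hv
  have huxy : act mul (act mul (meet u v) x) y ∈ H := by
    cases y with
    | none => exact hux
    | some b => exact h_delta _ b hd hux
  have hzt : act mul z t ∈ H := h_sle _ _ hle huxy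
  cases t with
  | none => exact hzt
  | some c => exact h_left z c hzt

end

theorem stmt11_general {G : Type*} (mul meet : G → G → G) (xi delta : G → G → Prop)
    (hmidem : ∀ a, meet a a = a)
    (hzx : ∀ a b, meet a b = a → xi a b)
    (H : Set G) :
    FxiClosed mul meet xi delta H ↔
      ((∀ x y, mul x y ∈ H → x ∈ H) ∧
       (∀ g1 g2, delta g1 g2 → g1 ∈ H → mul g1 g2 ∈ H) ∧
       (∀ g1 g2, meet g1 g2 = g1 → g1 ∈ H → g2 ∈ H) ∧
       (∀ g1 g2 x, xi g1 g2 → g1 ∈ H → mul g2 x ∈ H → mul (meet g1 g2) x ∈ H) ∧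
       (∀ g1 g2, xi g1 g2 → g1 ∈ H → g2 ∈ H → meet g1 g2 ∈ H)) := by
  have hrefl : ∀ a, xi a a := fun a => hzx a a (hmidem a)
  constructor
  · intro hH
    exact ⟨fun _ _ => hH.mem_of_mul_mem hmidem hrefl,
      fun _ _ => hH.mul_mem_of_delta hmidem hrefl,
      fun _ _ => hH.mem_of_sle hmidem hrefl,
      fun _ _ _ => hH.meet_mul_mem hmidem,
      fun _ _ => hH.meet_mem hmidem⟩
  · rintro ⟨h_left, h_delta, h_sle, h_meet_mul, h_meet⟩
    exact fxiClosed_of_conditions h_left h_delta h_sle h_meet_mul h_meet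

theorem stmt11 {G : Type*} (mul meet : G → G → G) (xi delta : G → G → Prop)
    (hassoc : ∀ a b c, mul (mul a b) c = mul a (mul b c))
    (hmassoc : ∀ a b c, meet (meet a b) c = meet a (meet b c))
    (hmcomm : ∀ a b, meet a b = meet b a)
    (hmidem : ∀ a, meet a a = a)
    (hzx : ∀ a b, meet a b = a → xi a b)
    (hlr : ∀ a b u, xi a b → xi (mul u a) (mul u b))
    (hdl : ∀ a b u, delta a b → delta (mul u a) b)
    (hf43 : ∀ a b c, mul a (meet b c) = meet (mul a b) (mul a c))
    (hf44 : ∀ x y u v, sle meet x y → sle meet u v → xi y v → xi u x)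
    (hf45 : ∀ x y u, xi x y → mul (meet x y) u = meet (mul x u) (mul y u))
    (H : Set G) (hne : H.Nonempty) :
    FxiClosed mul meet xi delta H ↔
      ((∀ x y, mul x y ∈ H → x ∈ H) ∧
       (∀ g1 g2, delta g1 g2 → g1 ∈ H → mul g1 g2 ∈ H) ∧
       (∀ g1 g2, meet g1 g2 = g1 → g1 ∈ H → g2 ∈ H) ∧
       (∀ g1 g2 x, xi g1 g2 → g1 ∈ H → mul g2 x ∈ H → mul (meet g1 g2) x ∈ H) ∧
       (∀ g1 g2, xi g1 g2 → g1 ∈ H → g2 ∈ H → meet g1 g2 ∈ H)) :=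
  stmt11_general mul meet xi delta hmidem hzx H
end

section
/- Let (Φ, ∘, ∩) be a set of partial transformations of A closed under composition and intersection, with semicompatibility relation ξ_Φ and semiadjacency relation δ_Φ. For every subset H_Φ ⊆ Φ and every φ in the f_{ξ_Φ}-closure of H_Φ, the intersection of the domains of all elements of H_Φ is contained in the domain of φ. -/
/-- A partial transformation of `A`, viewed as a functional subset of `A × A`. -/
def IsFunctional {A : Type*} (f : Set (A × A)) : Prop :=
  ∀ a b c : A, (a, b) ∈ f → (a, c) ∈ f → b = c

/-- Composition of partial transformations: `pcomp g f = g ∘ f`, i.e. apply `f` first. -/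
def pcomp {A : Type*} (g f : Set (A × A)) : Set (A × A) :=
  {p | ∃ b, (p.1, b) ∈ f ∧ (b, p.2) ∈ g}

/-- Domain of a partial transformation. -/
def pdom {A : Type*} (f : Set (A × A)) : Set A := {a | ∃ b, (a, b) ∈ f}

/-- Image (range) of a partial transformation. -/
def pran {A : Type*} (f : Set (A × A)) : Set A := {b | ∃ a, (a, b) ∈ f}

/-- The identity partial map restricted to `S`. -/
def idOn {A : Type*} (S : Set A) : Set (A × A) := {p | p.1 ∈ S ∧ p.2 = p.1}

/-- Semicompatibility: `f ∘ Δ_{dom g} = g ∘ Δ_{dom f}`. -/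
def semicompat {A : Type*} (f g : Set (A × A)) : Prop :=
  pcomp f (idOn (pdom g)) = pcomp g (idOn (pdom f))

/-- Semiadjacency: the image of `f` is contained in the domain of `g`. -/
def semiadj {A : Type*} (f g : Set (A × A)) : Prop := pran f ⊆ pdom g

/-- Semiadjacency relation `δ_Φ`. -/
def deltaPhi {A : Type*} (f g : Set (A × A)) : Prop := pran f ⊆ pdom g

/-- `H` is `f_{ξ_Φ}`-closed (within `Φ`, with the full identity map as adjoined identity):
if `(u,v) ∈ ξ_Φ`, `(x∘(u∩v), y) ∈ δ_Φ`, `y∘x∘(u∩v) ⊆ t∘z`, `u ∈ H` and `x∘v ∈ H`,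
then `z ∈ H`, where `x, y, t` range over `Φ` together with the identity map. -/
def FPhiClosed {A : Type*} (Φ H : Set (Set (A × A))) : Prop :=
  ∀ u v z x y t : Set (A × A),
    u ∈ Φ → v ∈ Φ → z ∈ Φ →
    (x ∈ Φ ∨ x = idOn (Set.univ : Set A)) →
    (y ∈ Φ ∨ y = idOn (Set.univ : Set A)) →
    (t ∈ Φ ∨ t = idOn (Set.univ : Set A)) →
    semicompat u v →
    deltaPhi (pcomp x (u ∩ v)) y →
    pcomp y (pcomp x (u ∩ v)) ⊆ pcomp t z →
    u ∈ H → pcomp x v ∈ H → z ∈ H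

/-- `f_{ξ_Φ}(H)`: the least `f_{ξ_Φ}`-closed subset containing `H`. -/
def fPhi {A : Type*} (Φ H : Set (Set (A × A))) : Set (Set (A × A)) :=
  ⋂₀ {K | H ⊆ K ∧ FPhiClosed Φ K}

theorem stmt14 {A : Type*} (Φ : Set (Set (A × A)))
    (hfun : ∀ f ∈ Φ, IsFunctional f)
    (hcomp : ∀ f ∈ Φ, ∀ g ∈ Φ, pcomp f g ∈ Φ)
    (hcap : ∀ f ∈ Φ, ∀ g ∈ Φ, f ∩ g ∈ Φ)
    (H : Set (Set (A × A))) (hH : H ⊆ Φ)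
    (φ : Set (A × A)) (hφ : φ ∈ fPhi Φ H) :
    (⋂ f ∈ H, pdom f) ⊆ pdom φ := by
  have key : φ ∈ {k : Set (A × A) | (⋂ f ∈ H, pdom f) ⊆ pdom k} := by
    apply hφ
    refine ⟨?_, ?_⟩
    · intro f hf a ha
      exact Set.mem_iInter₂.mp ha f hf
    · intro u v z x y t hu hv hz hx hy ht hsc hda hsub huK hxvK a ha
      obtain ⟨b, hb⟩ := huK ha
      obtain ⟨c, b', hb'v, hb'x⟩ := hxvK ha
      have hau : a ∈ pdom u := ⟨b, hb⟩
      have hav : a ∈ pdom v := ⟨b', hb'v⟩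
      have h1 : (a, b) ∈ pcomp u (idOn (pdom v)) := ⟨a, ⟨hav, rfl⟩, hb⟩
      rw [hsc] at h1
      obtain ⟨a', ⟨_, ha'⟩, hbv⟩ := h1
      have ha'a : a' = a := ha'
      rw [ha'a] at hbv
      have hbb' : b = b' := hfun v hv a b b' hbv hb'v
      subst hbb'
      have hxc : (a, c) ∈ pcomp x (u ∩ v) := ⟨b, ⟨hb, hbv⟩, hb'x⟩
      have hcy : c ∈ pdom y := hda ⟨a, hxc⟩
      obtain ⟨d, hd⟩ := hcy
      have : (a, d) ∈ pcomp t z := hsub ⟨c, hxc, hd⟩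
      obtain ⟨e, hez, _⟩ := this
      exact ⟨e, hez⟩
  exact key
end

section
/- In a ∩-semigroup of partial transformations Φ, if φ ∩ ψ belongs to the f_{ξ_Φ}-closure of {φ}, then φ ⊆ ψ. -/
theorem stmt15 {A : Type*} (Φ : Set (Set (A × A)))
    (hfun : ∀ f ∈ Φ, IsFunctional f)
    (hcomp : ∀ f ∈ Φ, ∀ g ∈ Φ, pcomp f g ∈ Φ)
    (hcap : ∀ f ∈ Φ, ∀ g ∈ Φ, f ∩ g ∈ Φ)
    (φ ψ : Set (A × A)) (hφ : φ ∈ Φ) (hψ : ψ ∈ Φ)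
    (h : φ ∩ ψ ∈ fPhi Φ {φ}) : φ ⊆ ψ := by
  have key : fPhi Φ {φ} ⊆ {χ | pdom φ ⊆ pdom χ} := by
    intro χ hχ
    apply hχ
    refine ⟨?_, ?_⟩
    · intro χ' hχ'
      rcases hχ' with rfl
      exact fun _ h => h
    · intro u v z x y t hu hv hz hx hy ht hsc hda hsub huH hxvH a ha
      have hau : a ∈ pdom u := huH ha
      have haxv : a ∈ pdom (pcomp x v) := hxvH ha
      obtain ⟨c, b, hbv, hbc⟩ := haxv
      obtain ⟨w, hw⟩ := hau
      have hav : a ∈ pdom v := ⟨b, hbv⟩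
      have hmem : ((a, w) : A × A) ∈ pcomp u (idOn (pdom v)) :=
        ⟨a, ⟨hav, rfl⟩, hw⟩
      rw [hsc] at hmem
      obtain ⟨a', ⟨hau', ha'⟩, hwv⟩ := hmem
      simp only at ha'
      subst a'
      have hbw : b = w := hfun v hv a b w hbv hwv
      subst hbw
      have hac : ((a, c) : A × A) ∈ pcomp x (u ∩ v) := ⟨b, ⟨hw, hwv⟩, hbc⟩
      obtain ⟨d, hd⟩ := hda ⟨a, hac⟩
      have hyd : ((a, d) : A × A) ∈ pcomp y (pcomp x (u ∩ v)) := ⟨c, hac, hd⟩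
      obtain ⟨e, hez, _⟩ := hsub hyd
      exact ⟨e, hez⟩
  have hdsub : pdom φ ⊆ pdom (φ ∩ ψ) := key h
  rintro ⟨a, b⟩ hab
  obtain ⟨c, hc⟩ := hdsub ⟨b, hab⟩
  have := hfun φ hφ a b c hab hc.1
  subst this
  exact hc.2
end

section
/- In a ∩-semigroup of partial transformations Φ, if φ ∩ ψ belongs to the f_{ξ_Φ}-closure of {φ, ψ}, then φ and ψ are semicompatible: φ ∘ Δ_{dom ψ} = ψ ∘ Δ_{dom φ}. -/
theorem stmt16 {A : Type*} (Φ : Set (Set (A × A)))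
    (hfun : ∀ f ∈ Φ, IsFunctional f)
    (hcomp : ∀ f ∈ Φ, ∀ g ∈ Φ, pcomp f g ∈ Φ)
    (hcap : ∀ f ∈ Φ, ∀ g ∈ Φ, f ∩ g ∈ Φ)
    (φ ψ : Set (A × A)) (hφ : φ ∈ Φ) (hψ : ψ ∈ Φ)
    (h : φ ∩ ψ ∈ fPhi Φ {φ, ψ}) :
    pcomp φ (idOn (pdom ψ)) = pcomp ψ (idOn (pdom φ)) := by
  -- Key claim: every common domain point is in the domain of φ ∩ ψ.
  have key : ∀ a, a ∈ pdom φ → a ∈ pdom ψ → a ∈ pdom (φ ∩ ψ) := by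
    intro a haφ haψ
    -- Apply h to the closed set {w | a ∈ pdom w}.
    have := h {w | a ∈ pdom w} ⟨?_, ?_⟩
    · exact this
    · intro w hw
      rcases hw with hw | hw
      · subst hw; exact haφ
      · simp only [Set.mem_singleton_iff] at hw; subst hw; exact haψ
    · intro u v z x y t hu hv hz hx hy ht hsc hdel hsub hua hxva
      -- a ∈ pdom u, a ∈ pdom (x ∘ v)
      obtain ⟨bu, hbu⟩ := hua
      obtain ⟨c, bv, hbv, hbvc⟩ := hxva
      -- a ∈ pdom v, so (a, bu) ∈ v by semicompatibility
      have hav : a ∈ pdom v := ⟨bv, hbv⟩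
      have h1 : (a, bu) ∈ pcomp u (idOn (pdom v)) := ⟨a, ⟨hav, rfl⟩, hbu⟩
      rw [hsc] at h1
      obtain ⟨m, hm, hmv⟩ := h1
      have hma : m = a := hm.2
      have hbuv : (a, bu) ∈ v := by rw [hma] at hmv; exact hmv
      have hbveq : bv = bu := hfun v hv a bv bu hbv hbuv
      subst hbveq
      -- (a, c) ∈ x ∘ (u ∩ v)
      have h2 : (a, c) ∈ pcomp x (u ∩ v) := ⟨bv, ⟨hbu, hbuv⟩, hbvc⟩
      -- c ∈ pran (x ∘ (u ∩ v)) ⊆ pdom y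
      obtain ⟨d, hd⟩ := hdel ⟨a, h2⟩
      have h3 : (a, d) ∈ pcomp y (pcomp x (u ∩ v)) := ⟨c, h2, hd⟩
      obtain ⟨e, he, _⟩ := hsub h3
      exact ⟨e, he⟩
  -- Now prove semicompatibility.
  ext p
  obtain ⟨a, b⟩ := p
  constructor
  · rintro ⟨m, ⟨hmψ, hm⟩, hmb⟩
    have hm' : m = a := hm
    rw [hm'] at hmb
    have haφ : a ∈ pdom φ := ⟨b, hmb⟩
    obtain ⟨c, hcφ, hcψ⟩ := key a haφ hmψ
    have : c = b := hfun φ hφ a c b hcφ hmb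
    subst this
    exact ⟨a, ⟨haφ, rfl⟩, hcψ⟩
  · rintro ⟨m, ⟨hmφ, hm⟩, hmb⟩
    have hm' : m = a := hm
    rw [hm'] at hmb
    have haψ : a ∈ pdom ψ := ⟨b, hmb⟩
    obtain ⟨c, hcφ, hcψ⟩ := key a hmφ haψ
    have : c = b := hfun ψ hψ a c b hcψ hmb
    subst this
    exact ⟨a, ⟨haψ, rfl⟩, hcφ⟩
end

section
/- In a ∩-semigroup of partial transformations Φ, if ψ ∘ φ belongs to the f_{ξ_Φ}-closure of {φ}, then the image of φ is contained in the domain of ψ (i.e., (φ, ψ) is in the semiadjacency relation). -/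
theorem stmt17 {A : Type*} (Φ : Set (Set (A × A)))
    (hfun : ∀ f ∈ Φ, IsFunctional f)
    (hcomp : ∀ f ∈ Φ, ∀ g ∈ Φ, pcomp f g ∈ Φ)
    (hcap : ∀ f ∈ Φ, ∀ g ∈ Φ, f ∩ g ∈ Φ)
    (φ ψ : Set (A × A)) (hφ : φ ∈ Φ) (hψ : ψ ∈ Φ)
    (h : pcomp ψ φ ∈ fPhi Φ {φ}) : pran φ ⊆ pdom ψ := by
  have hK : pdom φ ⊆ pdom (pcomp ψ φ) := by
    have hmem : pcomp ψ φ ∈ {χ : Set (A × A) | pdom φ ⊆ pdom χ} := by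
      apply h
      refine ⟨?_, ?_⟩
      · intro χ hχ
        rcases hχ with rfl
        exact fun a ha => ha
      · intro u v z x y t hu hv hz hx hy ht hsc hda hsub hU hXV
        intro a ha
        obtain ⟨b, hb⟩ := hU ha
        obtain ⟨d, c, hcv, hcx⟩ := hXV ha
        have h1 : (a, b) ∈ pcomp u (idOn (pdom v)) := ⟨a, ⟨⟨c, hcv⟩, rfl⟩, hb⟩
        rw [hsc] at h1
        obtain ⟨m, ⟨_, hm⟩, hbv⟩ := h1
        have hm' : m = a := hm
        rw [hm'] at hbv
        have hcb : c = b := hfun v hv a c b hcv hbv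
        subst hcb
        have hxd : (a, d) ∈ pcomp x (u ∩ v) := ⟨c, ⟨hb, hbv⟩, hcx⟩
        obtain ⟨e, he⟩ := hda ⟨a, hxd⟩
        obtain ⟨m', hm'z, _⟩ := hsub (show ((a, e) : A × A) ∈ pcomp y (pcomp x (u ∩ v)) from ⟨d, hxd, he⟩)
        exact ⟨m', hm'z⟩
    exact hmem
  intro b hb
  obtain ⟨a, hab⟩ := hb
  obtain ⟨d, b', hb'φ, hb'ψ⟩ := hK ⟨b, hab⟩
  have : b = b' := hfun φ hφ a b b' hab hb'φ
  subst this
  exact ⟨d, hb'ψ⟩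
end

section
/- In the algebraic system (G, ·, ⋏, ξ, δ) satisfying the axioms of Theorem 1 (ξ left regular containing the semilattice order, δ a left ideal, conditions (f-43)–(f-45)), for all g₁, g₂, x, y ∈ G: if x ≤ y and x ∈ f_ξ({g₁, g₂}) then y ∈ f_ξ({g₁, g₂}); moreover G \ f_ξ({g₁, g₂}) is a right ideal of (G, ·), i.e., g ∉ f_ξ({g₁,g₂}) implies gu ∉ f_ξ({g₁,g₂}) for all u. -/
theorem stmt18 {G : Type*} (mul meet : G → G → G) (xi delta : G → G → Prop)
    (hassoc : ∀ a b c, mul (mul a b) c = mul a (mul b c))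
    (hmassoc : ∀ a b c, meet (meet a b) c = meet a (meet b c))
    (hmcomm : ∀ a b, meet a b = meet b a)
    (hmidem : ∀ a, meet a a = a)
    (hzx : ∀ a b, meet a b = a → xi a b)
    (hlr : ∀ a b u, xi a b → xi (mul u a) (mul u b))
    (hdl : ∀ a b u, delta a b → delta (mul u a) b)
    (hf43 : ∀ a b c, mul a (meet b c) = meet (mul a b) (mul a c))
    (hf44 : ∀ x y u v, sle meet x y → sle meet u v → xi y v → xi u x)
    (hf45 : ∀ x y u, xi x y → mul (meet x y) u = meet (mul x u) (mul y u))
    (g1 g2 : G) :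
    (∀ x y, sle meet x y → x ∈ fxi mul meet xi delta {g1, g2} →
        y ∈ fxi mul meet xi delta {g1, g2}) ∧
    (∀ g u, g ∉ fxi mul meet xi delta {g1, g2} →
        mul g u ∉ fxi mul meet xi delta {g1, g2}) := by
  constructor
  · intro x y hxy hx K hK
    have hxK : x ∈ K := hx K hK
    exact hK.2 none none none y x x (hzx x x (hmidem x)) trivial
      (by simpa [act, sle, hmidem] using hxy) hxK hxK
  · intro g u hg hgu
    apply hg
    intro K hK
    have h : mul g u ∈ K := hgu K hK
    exact hK.2 none none (some u) g (mul g u) (mul g u)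
      (hzx _ _ (hmidem _)) trivial (by simp [act, sle, hmidem]) h h
end

section
/- In the algebraic system (G, ·, ⋏, ξ, δ) satisfying the axioms of Theorem 1, for all g₁, g₂ ∈ G the relation ε_{(g₁,g₂)} = {(x,y) | x ⋏ y ∈ f_ξ({g₁,g₂}) ∨ (x ∉ f_ξ({g₁,g₂}) ∧ y ∉ f_ξ({g₁,g₂}))} is an equivalence relation on G which is right regular (i.e., (x,y) ∈ ε implies (xz,yz) ∈ ε for all z ∈ G), and G \ f_ξ({g₁,g₂}) is one of its equivalence classes (when nonempty). -/
theorem stmt19 {G : Type*} (mul meet : G → G → G) (xi delta : G → G → Prop)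
    (hassoc : ∀ a b c, mul (mul a b) c = mul a (mul b c))
    (hmassoc : ∀ a b c, meet (meet a b) c = meet a (meet b c))
    (hmcomm : ∀ a b, meet a b = meet b a)
    (hmidem : ∀ a, meet a a = a)
    (hzx : ∀ a b, meet a b = a → xi a b)
    (hlr : ∀ a b u, xi a b → xi (mul u a) (mul u b))
    (hdl : ∀ a b u, delta a b → delta (mul u a) b)
    (hf43 : ∀ a b c, mul a (meet b c) = meet (mul a b) (mul a c))
    (hf44 : ∀ x y u v, sle meet x y → sle meet u v → xi y v → xi u x)
    (hf45 : ∀ x y u, xi x y → mul (meet x y) u = meet (mul x u) (mul y u))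
    (g1 g2 : G) :
    let F := fxi mul meet xi delta {g1, g2}
    let eps := fun x y => meet x y ∈ F ∨ (x ∉ F ∧ y ∉ F)
    Equivalence eps ∧
    (∀ x y z, eps x y → eps (mul x z) (mul y z)) ∧
    (∀ w, w ∉ F → {y | eps w y} = {y | y ∉ F}) := by
  intro F eps
  -- order lemmas
  have ile : ∀ a b : G, sle meet (meet a b) a := by
    intro a b
    show meet (meet a b) a = meet a b
    rw [hmassoc, hmcomm b a, ← hmassoc, hmidem]
  have ire : ∀ a b : G, sle meet (meet a b) b := by
    intro a b
    show meet (meet a b) b = meet a b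
    rw [hmassoc, hmidem]
  have lein : ∀ a b c : G, sle meet a b → sle meet a c → sle meet a (meet b c) := by
    intro a b c h1 h2
    show meet a (meet b c) = a
    rw [← hmassoc, h1, h2]
  have letr : ∀ a b c : G, sle meet a b → sle meet b c → sle meet a c := by
    intro a b c h1 h2
    show meet a c = a
    calc meet a c = meet (meet a b) c := by rw [h1]
      _ = meet a (meet b c) := hmassoc a b c
      _ = meet a b := by rw [h2]
      _ = a := h1
  -- F is f_xi-closed
  have hFcl : FxiClosed mul meet xi delta F := by
    intro x y t z u v hxi hd hs hu hv
    intro K hK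
    exact hK.2 x y t z u v hxi hd hs (hu K hK) (hv K hK)
  -- F is upward closed
  have F_up : ∀ a c : G, a ∈ F → sle meet a c → c ∈ F := by
    intro a c ha h
    refine hFcl none none none c a a (hzx a a (hmidem a)) trivial ?_ ha ha
    show sle meet (meet a a) c
    rw [hmidem]; exact h
  -- if a·z ∈ F then a ∈ F
  have F_div : ∀ a z : G, mul a z ∈ F → a ∈ F := by
    intro a z h
    refine hFcl none none (some z) a (mul a z) (mul a z)
      (hzx _ _ (hmidem _)) trivial ?_ h h
    show sle meet (meet (mul a z) (mul a z)) (mul a z)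
    rw [hmidem]; exact hmidem _
  have memF : ∀ a b : G, meet a b ∈ F → a ∈ F ∧ b ∈ F := by
    intro a b h
    exact ⟨F_up _ _ h (ile a b), F_up _ _ h (ire a b)⟩
  -- transitivity key
  have key_trans : ∀ x y z : G, meet x y ∈ F → meet y z ∈ F → meet x z ∈ F := by
    intro x y z hxy hyz
    have hxi' : xi (meet x y) (meet y z) :=
      hf44 (meet y z) y (meet x y) y (ile y z) (ire x y) (hzx y y (hmidem y))
    refine hFcl none none none (meet x z) (meet x y) (meet y z) hxi' trivial ?_ hxy hyz
    show sle meet (meet (meet x y) (meet y z)) (meet x z)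
    exact lein _ _ _
      (letr _ _ _ (ile (meet x y) (meet y z)) (ile x y))
      (letr _ _ _ (ire (meet x y) (meet y z)) (ire y z))
  -- right regularity key
  have key_reg : ∀ x y z : G, meet x y ∈ F →
      (mul x z ∈ F ∨ mul y z ∈ F) → meet (mul x z) (mul y z) ∈ F := by
    intro x y z hxy hor
    have h1 : xi (meet x y) x := hzx _ _ (ile x y)
    have h2 : xi (meet x y) y := hzx _ _ (ire x y)
    have e1 : meet (meet x y) x = meet x y := ile x y
    have e2 : meet (meet x y) y = meet x y := ire x y
    have sle1 : sle meet (mul (meet x y) z) (mul x z) := by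
      show meet (mul (meet x y) z) (mul x z) = mul (meet x y) z
      rw [← hf45 (meet x y) x z h1, e1]
    have sle2 : sle meet (mul (meet x y) z) (mul y z) := by
      show meet (mul (meet x y) z) (mul y z) = mul (meet x y) z
      rw [← hf45 (meet x y) y z h2, e2]
    have hle : sle meet (mul (meet x y) z) (meet (mul x z) (mul y z)) :=
      lein _ _ _ sle1 sle2
    rcases hor with hx | hy
    · refine hFcl (some z) none none (meet (mul x z) (mul y z)) (meet x y) x
        h1 trivial ?_ hxy hx
      show sle meet (mul (meet (meet x y) x) z) (meet (mul x z) (mul y z))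
      rw [e1]; exact hle
    · refine hFcl (some z) none none (meet (mul x z) (mul y z)) (meet x y) y
        h2 trivial ?_ hxy hy
      show sle meet (mul (meet (meet x y) y) z) (meet (mul x z) (mul y z))
      rw [e2]; exact hle
  refine ⟨⟨?_, ?_, ?_⟩, ?_, ?_⟩
  · -- refl
    intro a
    by_cases h : a ∈ F
    · exact Or.inl (by rw [hmidem]; exact h)
    · exact Or.inr ⟨h, h⟩
  · -- symm
    intro a b h
    rcases h with h | ⟨h1, h2⟩
    · exact Or.inl (by rw [hmcomm]; exact h)
    · exact Or.inr ⟨h2, h1⟩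
  · -- trans
    intro a b c hab hbc
    rcases hab with hab | ⟨ha, hb⟩
    · rcases hbc with hbc | ⟨hb, hc⟩
      · exact Or.inl (key_trans a b c hab hbc)
      · exact absurd (memF a b hab).2 hb
    · rcases hbc with hbc | ⟨hb, hc⟩
      · exact absurd (memF b c hbc).1 hb
      · exact Or.inr ⟨ha, hc⟩
  · -- right regular
    intro x y z h
    rcases h with h | ⟨hx, hy⟩
    · by_cases hxz : mul x z ∈ F
      · exact Or.inl (key_reg x y z h (Or.inl hxz))
      · by_cases hyz : mul y z ∈ F
        · exact Or.inl (key_reg x y z h (Or.inr hyz))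
        · exact Or.inr ⟨hxz, hyz⟩
    · exact Or.inr ⟨fun h' => hx (F_div x z h'), fun h' => hy (F_div y z h')⟩
  · -- complement class
    intro w hw
    ext y
    constructor
    · intro h
      rcases h with h | ⟨_, hy⟩
      · exact absurd (memF w y h).1 hw
      · exact hy
    · intro hy
      exact Or.inr ⟨hw, hy⟩
end
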